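/- For each 1 ≤ k ≤ n, the process X_{k,1}, X_{k,2}, …, X_{k,mn+1} is a supermartingale: for each 1 ≤ t ≤ mn, almost surely E(X_{k,t+1} | g_1,…,g_t, z_1,…,z_{t−1}) ≤ X_{k,t}. -/

import Mathlib

open MeasureTheory ProbabilityTheory Finset

/-- `cntA g k t ω` is `a(k,t)`: the number of rounds `1 ≤ i < t` in which label `k` was
guessed. -/
def cntA {Ω : Type*} (g : ℕ → Ω → ℕ) (k t : ℕ) (ω : Ω) : ℕ :=
  ((Finset.Ico 1 t).filter fun i => g i ω = k).card

/-- `cntB g z k t ω` is `c(k,t)`: the number of rounds `1 ≤ i < t` in which label `k` was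
guessed and `z i = 1`. -/
def cntB {Ω : Type*} (g z : ℕ → Ω → ℕ) (k t : ℕ) (ω : Ω) : ℕ :=
  ((Finset.Ico 1 t).filter fun i => g i ω = k ∧ z i ω = 1).card

/-- `Y := ⌊(√m)·n/6⌋`. -/
noncomputable def Yval (m n : ℕ) : ℕ := ⌊Real.sqrt m * n / 6⌋₊

/-- A deck `d` (read on positions `1,…,m*n`) is valid if every value lies in `{1,…,n}` and
every label `k ∈ {1,…,n}` appears exactly `m` times. -/
def ValidDeck (m n : ℕ) (d : ℕ → ℕ) : Prop :=
  (∀ t ∈ Finset.Icc 1 (m * n), d t ∈ Finset.Icc 1 n) ∧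
    ∀ k ∈ Finset.Icc 1 n, ((Finset.Icc 1 (m * n)).filter fun t => d t = k).card = m

/-- The σ-algebra generated by `u_1,…,u_s` and `v_1,…,v_r`. -/
def hist2 {Ω : Type*} (u v : ℕ → Ω → ℕ) (s r : ℕ) : MeasurableSpace Ω :=
  MeasurableSpace.comap
    (fun ω => ((fun i : Fin s => u (i.1 + 1) ω), (fun i : Fin r => v (i.1 + 1) ω)))
    inferInstance

/-- The function `f(x) = x²` for `x ≤ 0`, `f(x) = 0` for `0 < x < c`, and `f(x) = (x − c)²`
for `x ≥ c`. -/
noncomputable def fFun (c x : ℝ) : ℝ :=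
  if x ≤ 0 then x ^ 2 else if x < c then 0 else (x - c) ^ 2

/-- `X_{k,t} := f(c(k,t) − a(k,t)/n) − 3·c(k,t) − 3·a(k,t)/n` with `f` taken at threshold
`c := Y/n`. -/
noncomputable def Xproc {Ω : Type*} (m n : ℕ) (g z : ℕ → Ω → ℕ) (k t : ℕ) (ω : Ω) : ℝ :=
  fFun ((Yval m n : ℝ) / n) ((cntB g z k t ω : ℝ) - (cntA g k t ω : ℝ) / n)
    - 3 * (cntB g z k t ω : ℝ) - 3 * (cntA g k t ω : ℝ) / n

/-! The argument runs through the signed distance `H` from `x = c(k,t) − a(k,t)/n` to `[0, Y/n]`,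
for which `f = H²`. Given the history, `X_{k,t+1}` is affine in `z_t`, so its conditional
expectation replaces `z_t` by `p = E(z_t | history)`. Property (c) makes `p − 1/n` have the sign
of `Y/n − x`, so in the expansion of `p (H + 1 − 1/n)² + (1 − p) (H − 1/n)²` the cross term
`2H(p − 1/n)` is nonpositive and the rest is absorbed by `−3p − 3/n`. Once `a(k,t) ≥ mn − Y`,
property (a) forces `c(k,t) = m` and `z_t = 0`, and `x − 1/n` lies in `[0, Y/n)`, where `f`
vanishes. -/

noncomputable def signedDistIcc (b x : ℝ) : ℝ := max (x - b) 0 + min x 0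

lemma fFun_nonneg (b x : ℝ) : 0 ≤ fFun b x := by
  unfold fFun; split_ifs <;> positivity

section signedDistIcc
variable {b : ℝ}

lemma sub_le_signedDistIcc (hb : 0 ≤ b) (x : ℝ) : x - b ≤ signedDistIcc b x := by
  unfold signedDistIcc
  rcases max_cases (x - b) 0 with ⟨h1, _⟩ | ⟨h1, _⟩ <;>
    rcases min_cases x 0 with ⟨h2, _⟩ | ⟨h2, _⟩ <;> linarith

lemma signedDistIcc_le (hb : 0 ≤ b) (x : ℝ) : signedDistIcc b x ≤ x := by
  unfold signedDistIcc
  rcases max_cases (x - b) 0 with ⟨h1, _⟩ | ⟨h1, _⟩ <;>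
    rcases min_cases x 0 with ⟨h2, _⟩ | ⟨h2, _⟩ <;> linarith

lemma signedDistIcc_mul_sub_nonneg (hb : 0 ≤ b) (x : ℝ) : 0 ≤ signedDistIcc b x * (x - b) := by
  unfold signedDistIcc
  rcases max_cases (x - b) 0 with ⟨h1, _⟩ | ⟨h1, _⟩ <;>
    rcases min_cases x 0 with ⟨h2, _⟩ | ⟨h2, _⟩ <;> rw [h1, h2] <;> nlinarith

lemma fFun_eq_signedDistIcc_sq (hb : 0 ≤ b) (x : ℝ) : fFun b x = signedDistIcc b x ^ 2 := by
  unfold fFun signedDistIcc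
  rcases max_cases (x - b) 0 with ⟨h1, _⟩ | ⟨h1, _⟩ <;>
    rcases min_cases x 0 with ⟨h2, _⟩ | ⟨h2, _⟩ <;> rw [h1, h2] <;> split_ifs <;> nlinarith

lemma continuous_fFun (hb : 0 ≤ b) : Continuous (fFun b) := by
  simp only [funext (fFun_eq_signedDistIcc_sq hb), signedDistIcc]
  fun_prop

lemma fFun_eq_zero_of_mem_Ico {x : ℝ} (hx : x ∈ Set.Ico 0 b) : fFun b x = 0 := by
  obtain ⟨h0, hb⟩ := hx
  unfold fFun; split_ifs <;> nlinarith

lemma fFun_add_le_sq (hb : 0 ≤ b) (x δ : ℝ) :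
    fFun b (x + δ) ≤ (signedDistIcc b x + δ) ^ 2 := by
  have := sub_le_signedDistIcc hb x
  have := signedDistIcc_le hb x
  unfold fFun; split_ifs <;> nlinarith

end signedDistIcc

/-- The increment of `X_{k,·}` in a round where `k` is guessed, at `b = Y/n`, `ε = 1/n`,
`x = c(k,t) − a(k,t)/n` and `ζ = z_t`. -/
noncomputable def stepIncr (b ε x ζ : ℝ) : ℝ := fFun b (x + ζ - ε) - fFun b x - 3 * ζ - 3 * ε

section stepIncr
variable {b ε x : ℝ}

lemma continuous_stepIncr (hb : 0 ≤ b) (ε ζ : ℝ) : Continuous fun x => stepIncr b ε x ζ := by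
  have := continuous_fFun hb
  unfold stepIncr
  fun_prop

lemma average_stepIncr_nonpos {p q : ℝ} (hb : 0 ≤ b) (hε0 : 0 ≤ ε) (hε1 : ε ≤ 1)
    (hp0 : 0 ≤ p) (hp1 : p ≤ 1) (hq : 0 < q) (hpq : p - ε = (b - x) / q) :
    p * stepIncr b ε x 1 + (1 - p) * stepIncr b ε x 0 ≤ 0 := by
  set H := signedDistIcc b x
  have hdrift : H * (p - ε) ≤ 0 := by
    have hsign := signedDistIcc_mul_sub_nonneg hb x
    rw [hpq, mul_div_assoc', div_nonpos_iff]
    right; constructor <;> nlinarith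
  have hsq := fFun_eq_signedDistIcc_sq hb x
  have hup := fFun_add_le_sq hb x (1 - ε)
  have hdown := fFun_add_le_sq hb x (0 - ε)
  calc p * stepIncr b ε x 1 + (1 - p) * stepIncr b ε x 0
      ≤ p * ((H + (1 - ε)) ^ 2 - H ^ 2 - 3 * 1 - 3 * ε)
        + (1 - p) * ((H + (0 - ε)) ^ 2 - H ^ 2 - 3 * 0 - 3 * ε) := by
        unfold stepIncr
        rw [add_sub_assoc, add_sub_assoc, hsq]
        exact add_le_add (mul_le_mul_of_nonneg_left (by linarith) hp0)
          (mul_le_mul_of_nonneg_left (by linarith) (by linarith))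
    _ = 2 * (H * (p - ε)) + p * (1 - ε) ^ 2 + (1 - p) * ε ^ 2 - 3 * p - 3 * ε := by ring
    _ ≤ 0 := by nlinarith

lemma stepIncr_zero_nonpos (hε : 0 ≤ ε) (hx : x - ε ∈ Set.Ico 0 b) : stepIncr b ε x 0 ≤ 0 := by
  have := fFun_nonneg b x
  rw [stepIncr, add_zero, fFun_eq_zero_of_mem_Ico hx]
  linarith

lemma average_stepIncr_nonpos_of_lt {m n a c Y : ℝ} (hn : 1 ≤ n) (hY : 0 ≤ Y)
    (hlive : a < m * n - Y) (hlo : m - (m * n - a - Y) ≤ c) (hhi : c ≤ m) :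
    (m - c) / (m * n - a - Y) * stepIncr (Y / n) (1 / n) (c - a / n) 1
      + (1 - (m - c) / (m * n - a - Y)) * stepIncr (Y / n) (1 / n) (c - a / n) 0 ≤ 0 := by
  have hq : 0 < m * n - a - Y := by linarith
  apply average_stepIncr_nonpos (by positivity) (by positivity) (div_le_one_of_le₀ hn (by linarith))
    (div_nonneg (by linarith) hq.le) ((div_le_one hq).mpr (by linarith)) hq
  field_simp
  ring

lemma stepIncr_zero_nonpos_of_le {m n a Y : ℝ} (hn : 0 < n) (ha : a + 1 ≤ m * n)
    (hsat : m * n - Y ≤ a) : stepIncr (Y / n) (1 / n) (m - a / n) 0 ≤ 0 := by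
  apply stepIncr_zero_nonpos (by positivity)
  have hx : m - a / n - 1 / n = (m * n - a - 1) / n := by field_simp
  rw [hx]
  exact ⟨div_nonneg (by linarith) hn.le, div_lt_div_of_pos_right (by linarith) hn⟩

end stepIncr

section counters
variable {Ω : Type*} (u v : ℕ → Ω → ℕ) (k t : ℕ) (ω : Ω)

lemma cntA_succ (ht : 1 ≤ t) :
    cntA u k (t + 1) ω = cntA u k t ω + if u t ω = k then 1 else 0 := by
  rw [cntA, cntA, Nat.Ico_succ_right_eq_insert_Ico ht, filter_insert]
  split_ifs <;> simp [card_insert_of_notMem]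

lemma cntB_succ (ht : 1 ≤ t) :
    cntB u v k (t + 1) ω = cntB u v k t ω + if u t ω = k ∧ v t ω = 1 then 1 else 0 := by
  rw [cntB, cntB, Nat.Ico_succ_right_eq_insert_Ico ht, filter_insert]
  split_ifs <;> simp [card_insert_of_notMem]

lemma cntA_le : cntA u k t ω ≤ t - 1 := by
  simpa [cntA] using card_filter_le (Ico 1 t) fun i => u i ω = k

lemma cntB_le : cntB u v k t ω ≤ t - 1 := by
  simpa [cntB] using card_filter_le (Ico 1 t) fun i => u i ω = k ∧ v i ω = 1

end counters

lemma measurable_card_filter {ι Ω : Type*} {mΩ : MeasurableSpace Ω} (s : Finset ι)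
    {p : ι → Ω → Prop}
    [∀ i ω, Decidable (p i ω)] (hp : ∀ i ∈ s, MeasurableSet {ω | p i ω}) :
    Measurable fun ω => (s.filter (p · ω)).card := by
  simp only [card_filter]
  exact Finset.measurable_sum s fun i hi =>
    Measurable.ite (hp i hi) measurable_const measurable_const

section hist2
variable {Ω : Type*} (u v : ℕ → Ω → ℕ) (s r : ℕ)

lemma hist2_le [MeasurableSpace Ω] (hu : ∀ i, Measurable (u i)) (hv : ∀ i, Measurable (v i)) :
    hist2 u v s r ≤ ‹MeasurableSpace Ω› :=
  measurable_iff_comap_le.mp <|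
    (measurable_pi_lambda _ fun _ => hu _).prodMk (measurable_pi_lambda _ fun _ => hv _)

variable {s r}

lemma measurable_hist2_left {i : ℕ} (h1 : 1 ≤ i) (h2 : i ≤ s) :
    Measurable[hist2 u v s r] (u i) := by
  obtain ⟨j, rfl⟩ : ∃ j, i = j + 1 := ⟨i - 1, by omega⟩
  exact (measurable_pi_apply (X := fun _ : Fin s => ℕ) ⟨j, by omega⟩).comp
    (measurable_fst.comp (comap_measurable _))

lemma measurable_hist2_right {i : ℕ} (h1 : 1 ≤ i) (h2 : i ≤ r) :
    Measurable[hist2 u v s r] (v i) := by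
  obtain ⟨j, rfl⟩ : ∃ j, i = j + 1 := ⟨i - 1, by omega⟩
  exact (measurable_pi_apply (X := fun _ : Fin r => ℕ) ⟨j, by omega⟩).comp
    (measurable_snd.comp (comap_measurable _))

lemma measurable_cntA_hist2 (k : ℕ) {t : ℕ} (ht : t ≤ s + 1) :
    Measurable[hist2 u v s r] (cntA u k t) :=
  measurable_card_filter _ fun i hi =>
    measurable_hist2_left u v (mem_Ico.mp hi).1 (by grind) (measurableSet_singleton k)

lemma measurable_cntB_hist2 (k : ℕ) {t : ℕ} (hts : t ≤ s + 1) (htr : t ≤ r + 1) :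
    Measurable[hist2 u v s r] (cntB u v k t) :=
  measurable_card_filter _ fun i hi =>
    (measurable_hist2_left u v (mem_Ico.mp hi).1 (by grind) (measurableSet_singleton k)).inter
      (measurable_hist2_right u v (mem_Ico.mp hi).1 (by grind) (measurableSet_singleton 1))

end hist2

lemma integrable_comp_of_norm_le {Ω E : Type*} [MeasurableSpace Ω] {μ : Measure Ω}
    [IsFiniteMeasure μ] [NormedAddCommGroup E] [ProperSpace E] [MeasurableSpace E]
    [OpensMeasurableSpace E] {φ : E → ℝ} (hφ : Continuous φ) {X : Ω → E} (hX : Measurable X)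
    {R : ℝ} (hR : ∀ ω, ‖X ω‖ ≤ R) : Integrable (φ ∘ X) μ := by
  obtain ⟨C, hC⟩ := (isCompact_closedBall (0 : E) R).exists_bound_of_continuousOn hφ.continuousOn
  exact Integrable.of_bound (hφ.measurable.comp hX).aestronglyMeasurable C
    (ae_of_all _ fun ω => hC _ (mem_closedBall_zero_iff.mpr (hR ω)))

lemma condExp_add_mul_of_stronglyMeasurable {Ω : Type*} {m m₀ : MeasurableSpace Ω}
    {μ : Measure Ω} [IsFiniteMeasure μ] (hm : m ≤ m₀) {U W Z : Ω → ℝ} {C : ℝ}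
    (hU : StronglyMeasurable[m] U) (hUi : Integrable U μ) (hW : StronglyMeasurable[m] W)
    (hWi : Integrable W μ) (hZ : AEStronglyMeasurable Z μ) (hZC : ∀ᵐ ω ∂μ, ‖Z ω‖ ≤ C) :
    μ[U + W * Z | m] =ᵐ[μ] U + W * μ[Z | m] := by
  have hWZ : Integrable (W * Z) μ :=
    (hWi.bdd_mul hZ hZC).congr (ae_of_all _ fun ω => mul_comm _ _)
  refine (condExp_add hUi hWZ m).trans ?_
  rw [condExp_of_stronglyMeasurable hm hU hUi]
  exact Filter.EventuallyEq.rfl.add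
    (condExp_mul_of_stronglyMeasurable_left hW hWZ (Integrable.of_bound hZ C hZC))

section process
variable {Ω : Type*} (m n : ℕ) (g z : ℕ → Ω → ℕ) (k t : ℕ)

/-- Property (a) at `(k, t)`. -/
def CntBounds (ω : Ω) : Prop :=
  (m : ℝ) - max ((m * n : ℝ) - (cntA g k t ω : ℝ) - (Yval m n : ℝ)) 0 ≤ (cntB g z k t ω : ℝ) ∧
    (cntB g z k t ω : ℝ) ≤ (m : ℝ)

def cntState (ω : Ω) : ℝ × ℝ := (cntB g z k t ω, cntA g k t ω)

noncomputable def XprocBase (ω : Ω) : ℝ :=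
  Xproc m n g z k t ω + {ω | g t ω = k}.indicator
    (fun ω => stepIncr (Yval m n / n) (1 / n) (cntB g z k t ω - cntA g k t ω / n) 0) ω

/-- Cut off where `a(k,t) ≥ mn − Y`, since property (a) forces `z_t = 0` there. -/
noncomputable def XprocSlope : Ω → ℝ :=
  {ω | g t ω = k ∧ (cntA g k t ω : ℝ) < m * n - Yval m n}.indicator fun ω =>
    stepIncr (Yval m n / n) (1 / n) (cntB g z k t ω - cntA g k t ω / n) 1
      - stepIncr (Yval m n / n) (1 / n) (cntB g z k t ω - cntA g k t ω / n) 0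

lemma norm_cntState_le (ω : Ω) : ‖cntState g z k t ω‖ ≤ t := by
  have hA := cntA_le g k t ω
  have hB := cntB_le g z k t ω
  rw [cntState, Prod.norm_def, Real.norm_natCast, Real.norm_natCast, max_le_iff, Nat.cast_le,
    Nat.cast_le]
  omega

lemma measurable_cntState_hist2 (ht : 1 ≤ t) :
    Measurable[hist2 g z t (t - 1)] (cntState g z k t) :=
  (measurable_from_nat.comp (measurable_cntB_hist2 g z k le_self_add (by omega))).prodMk
    (measurable_from_nat.comp (measurable_cntA_hist2 g z k le_self_add))

variable {g z k t}

lemma continuous_Xproc_of_state :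
    Continuous fun s : ℝ × ℝ => fFun (Yval m n / n) (s.1 - s.2 / n) - 3 * s.1 - 3 * s.2 / n := by
  have := continuous_fFun (b := Yval m n / n) (by positivity)
  fun_prop

lemma continuous_stepIncr_of_state (ζ : ℝ) :
    Continuous fun s : ℝ × ℝ => stepIncr (Yval m n / n) (1 / n) (s.1 - s.2 / n) ζ :=
  (continuous_stepIncr (by positivity) _ ζ).comp (by fun_prop)

lemma measurableSet_XprocSlope_support {mΩ : MeasurableSpace Ω} (hg : Measurable (g t))
    (hs : Measurable (cntState g z k t)) :
    MeasurableSet {ω | g t ω = k ∧ (cntA g k t ω : ℝ) < m * n - Yval m n} :=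
  (hg (measurableSet_singleton k)).inter (measurableSet_lt hs.snd measurable_const)

lemma measurable_XprocBase {mΩ : MeasurableSpace Ω} (hg : Measurable (g t))
    (hs : Measurable (cntState g z k t)) : Measurable (XprocBase m n g z k t) := by
  have hX := (continuous_Xproc_of_state m n).measurable.comp hs
  have hI := (continuous_stepIncr_of_state m n 0).measurable.comp hs
  exact hX.add (hI.indicator (hg (measurableSet_singleton k)))

lemma measurable_XprocSlope {mΩ : MeasurableSpace Ω} (hg : Measurable (g t))
    (hs : Measurable (cntState g z k t)) : Measurable (XprocSlope m n g z k t) := by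
  have h1 := (continuous_stepIncr_of_state m n 1).measurable.comp hs
  have h0 := (continuous_stepIncr_of_state m n 0).measurable.comp hs
  exact (h1.sub h0).indicator (measurableSet_XprocSlope_support m n hg hs)

variable [MeasurableSpace Ω] (μ : Measure Ω) [IsFiniteMeasure μ]

lemma integrable_XprocBase (hg : Measurable (g t)) (hs : Measurable (cntState g z k t)) :
    Integrable (XprocBase m n g z k t) μ := by
  have hX := integrable_comp_of_norm_le (μ := μ) (continuous_Xproc_of_state m n) hs
    (norm_cntState_le g z k t)
  have hI := integrable_comp_of_norm_le (μ := μ) (continuous_stepIncr_of_state m n 0) hs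
    (norm_cntState_le g z k t)
  exact hX.add (hI.indicator (hg (measurableSet_singleton k)))

lemma integrable_XprocSlope (hg : Measurable (g t)) (hs : Measurable (cntState g z k t)) :
    Integrable (XprocSlope m n g z k t) μ := by
  have h1 := integrable_comp_of_norm_le (μ := μ) (continuous_stepIncr_of_state m n 1) hs
    (norm_cntState_le g z k t)
  have h0 := integrable_comp_of_norm_le (μ := μ) (continuous_stepIncr_of_state m n 0) hs
    (norm_cntState_le g z k t)
  exact (h1.sub h0).indicator (measurableSet_XprocSlope_support m n hg hs)

end process

section step
variable {Ω : Type*} {m n : ℕ} {g z : ℕ → Ω → ℕ} {k t : ℕ} {ω : Ω}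

lemma Xproc_succ_of_eq (ht : 1 ≤ t) (hgk : g t ω = k) (hz : z t ω = 0 ∨ z t ω = 1) :
    Xproc m n g z k (t + 1) ω = Xproc m n g z k t ω +
      stepIncr (Yval m n / n) (1 / n) (cntB g z k t ω - cntA g k t ω / n) (z t ω) := by
  rcases hz with hz | hz <;>
    simp [Xproc, stepIncr, cntA_succ g k t ω ht, cntB_succ g z k t ω ht, hgk, hz] <;> ring_nf

lemma Xproc_succ_of_ne (ht : 1 ≤ t) (hgk : g t ω ≠ k) :
    Xproc m n g z k (t + 1) ω = Xproc m n g z k t ω := by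
  simp [Xproc, cntA_succ g k t ω ht, cntB_succ g z k t ω ht, hgk]

lemma z_eq_zero_of_le_cntA (ht : 1 ≤ t) (hgk : g t ω = k) (hz : z t ω = 0 ∨ z t ω = 1)
    (hsat : (m * n : ℝ) - Yval m n ≤ cntA g k t ω) (hbd : CntBounds m n g z k t ω)
    (hbd' : CntBounds m n g z k (t + 1) ω) : z t ω = 0 := by
  refine hz.resolve_right fun h1 => ?_
  have hlo := hbd.1
  have hhi := hbd'.2
  rw [max_eq_right (by linarith)] at hlo
  rw [cntB_succ g z k t ω ht, if_pos ⟨hgk, h1⟩] at hhi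
  push_cast at hhi
  linarith

lemma Xproc_succ_eq_XprocBase_add (ht : 1 ≤ t) (hz : z t ω = 0 ∨ z t ω = 1)
    (hbd : CntBounds m n g z k t ω) (hbd' : CntBounds m n g z k (t + 1) ω) :
    Xproc m n g z k (t + 1) ω = XprocBase m n g z k t ω + XprocSlope m n g z k t ω * z t ω := by
  by_cases hgk : g t ω = k
  · rw [Xproc_succ_of_eq ht hgk hz]
    by_cases hlive : (cntA g k t ω : ℝ) < m * n - Yval m n
    · rcases hz with hz | hz <;> simp [XprocBase, XprocSlope, hgk, hlive, hz]
    · rw [z_eq_zero_of_le_cntA ht hgk hz (not_lt.mp hlive) hbd hbd']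
      simp [XprocBase, XprocSlope, hgk, hlive]
  · rw [Xproc_succ_of_ne ht hgk]
    simp [XprocBase, XprocSlope, hgk]

lemma XprocBase_add_XprocSlope_mul_le (ht : t ∈ Icc 1 (m * n)) (hn : 1 ≤ n) {P : ℝ}
    (hbd : CntBounds m n g z k t ω)
    (hP : g t ω = k → (cntA g k t ω : ℝ) < m * n - Yval m n →
      P = (m - cntB g z k t ω) / (m * n - cntA g k t ω - Yval m n)) :
    XprocBase m n g z k t ω + XprocSlope m n g z k t ω * P ≤ Xproc m n g z k t ω := by
  obtain ⟨ht1, htmn⟩ := mem_Icc.mp ht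
  have hnR : (1 : ℝ) ≤ n := by exact_mod_cast hn
  obtain ⟨hlo, hhi⟩ := hbd
  by_cases hgk : g t ω = k
  · by_cases hlive : (cntA g k t ω : ℝ) < m * n - Yval m n
    · simp only [XprocBase, XprocSlope, Set.indicator_apply, Set.mem_ofPred_eq, hgk, hlive,
        and_self, if_true, hP hgk hlive]
      rw [max_eq_left (by linarith)] at hlo
      linarith [average_stepIncr_nonpos_of_lt hnR (Nat.cast_nonneg _) hlive hlo hhi]
    · simp only [XprocBase, XprocSlope, Set.indicator_apply, Set.mem_ofPred_eq, hgk, hlive,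
        and_false, if_true, if_false, zero_mul, add_zero]
      rw [max_eq_right (by linarith)] at hlo
      have hcm : (cntB g z k t ω : ℝ) = m := le_antisymm hhi (by linarith)
      have ha : (cntA g k t ω : ℝ) + 1 ≤ m * n := by
        have := cntA_le g k t ω
        exact_mod_cast (by omega : cntA g k t ω + 1 ≤ m * n)
      have := stepIncr_zero_nonpos_of_le (by positivity) ha (not_lt.mp hlive)
      rw [← hcm] at this
      linarith
  · simp [XprocBase, XprocSlope, hgk]

end step

theorem Xproc_supermartingale_general
    {Ω : Type*} [MeasurableSpace Ω] (μ : Measure Ω) [IsProbabilityMeasure μ]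
    (m n : ℕ)
    (g z : ℕ → Ω → ℕ)
    (hgmeas : ∀ t, Measurable (g t))
    (hzmeas : ∀ t, Measurable (z t))
    -- `z` is a `{0,1}`-valued vector
    (hz01 : ∀ t ∈ Finset.Icc 1 (m * n), ∀ ω, z t ω = 0 ∨ z t ω = 1)
    -- property (a)
    (ha : ∀ᵐ ω ∂μ, ∀ k ∈ Finset.Icc 1 n, ∀ t ∈ Finset.Icc 1 (m * n + 1),
      (m : ℝ) - max ((m * n : ℝ) - (cntA g k t ω : ℝ) - (Yval m n : ℝ)) 0
          ≤ (cntB g z k t ω : ℝ) ∧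
        (cntB g z k t ω : ℝ) ≤ (m : ℝ))
    -- property (c)
    (hc : ∀ t ∈ Finset.Icc 1 (m * n), ∀ᵐ ω ∂μ,
      ((cntA g (g t ω) t ω : ℝ) < (m * n : ℝ) - (Yval m n : ℝ)) →
        (μ[(fun ω' => (z t ω' : ℝ)) | hist2 g z t (t - 1)]) ω =
          ((m : ℝ) - (cntB g z (g t ω) t ω : ℝ)) /
            ((m * n : ℝ) - (cntA g (g t ω) t ω : ℝ) - (Yval m n : ℝ))) :
    ∀ k ∈ Finset.Icc 1 n, ∀ t ∈ Finset.Icc 1 (m * n), ∀ᵐ ω ∂μ,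
      (μ[(fun ω' => Xproc m n g z k (t + 1) ω') | hist2 g z t (t - 1)]) ω
        ≤ Xproc m n g z k t ω := by
  intro k hk t ht
  have hn : 1 ≤ n := (mem_Icc.mp hk).1.trans (mem_Icc.mp hk).2
  have ht1 : 1 ≤ t := (mem_Icc.mp ht).1
  have hF := hist2_le g z t (t - 1) hgmeas hzmeas
  have hstate := measurable_cntState_hist2 g z k t ht1
  have hgt := measurable_hist2_left g z (r := t - 1) ht1 le_rfl
  have hdecomp : (fun ω => Xproc m n g z k (t + 1) ω) =ᵐ[μ]
      XprocBase m n g z k t + XprocSlope m n g z k t * fun ω => (z t ω : ℝ) := by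
    filter_upwards [ha] with ω hω
    exact Xproc_succ_eq_XprocBase_add ht1 (hz01 t ht ω) (hω k hk t (by grind))
      (hω k hk (t + 1) (by grind))
  have hcond := (condExp_congr_ae hdecomp).trans
    (condExp_add_mul_of_stronglyMeasurable hF
      (measurable_XprocBase m n hgt hstate).stronglyMeasurable
      (integrable_XprocBase m n μ (hgmeas t) (hstate.mono hF le_rfl))
      (measurable_XprocSlope m n hgt hstate).stronglyMeasurable
      (integrable_XprocSlope m n μ (hgmeas t) (hstate.mono hF le_rfl))
      (measurable_from_nat.comp (hzmeas t)).aestronglyMeasurable (C := 1)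
      (ae_of_all _ fun ω => by rcases hz01 t ht ω with h | h <;> simp [h]))
  filter_upwards [hcond, ha, hc t ht] with ω hω haω hcω
  rw [hω]
  exact XprocBase_add_XprocSlope_mul_le ht hn (haω k hk t (by grind)) fun hgk => hgk ▸ hcω

/-- for each `1 ≤ k ≤ n`, the process `X_{k,1}, …, X_{k,mn+1}` is a
supermartingale: for each `1 ≤ t ≤ mn`, almost surely
`E(X_{k,t+1} | g_1,…,g_t, z_1,…,z_{t−1}) ≤ X_{k,t}`. -/
theorem Xproc_supermartingale
    {Ω : Type*} [MeasurableSpace Ω] (μ : Measure Ω) [IsProbabilityMeasure μ]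
    (m n : ℕ) (hm : 0 < m) (hn : 0 < n)
    (hmn : (1200 : ℝ) * Real.sqrt m ≤ n)
    (D g y z : ℕ → Ω → ℕ)
    (hDmeas : ∀ t, Measurable (D t))
    (hgmeas : ∀ t, Measurable (g t))
    (hymeas : ∀ t, Measurable (y t))
    (hzmeas : ∀ t, Measurable (z t))
    (hDvalid : ∀ᵐ ω ∂μ, ValidDeck m n (fun t => D t ω))
    (hDunif : ∀ d₁ d₂ : ℕ → ℕ, ValidDeck m n d₁ → ValidDeck m n d₂ →
      μ {ω | ∀ t ∈ Finset.Icc 1 (m * n), D t ω = d₁ t} =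
        μ {ω | ∀ t ∈ Finset.Icc 1 (m * n), D t ω = d₂ t})
    (S : List ℕ → ℕ) (hS : ∀ l, S l ∈ Finset.Icc 1 n)
    (hg : ∀ t ∈ Finset.Icc 1 (m * n), ∀ ω,
      g t ω = S (List.ofFn fun i : Fin (t - 1) => y (i.1 + 1) ω))
    (hy : ∀ t ∈ Finset.Icc 1 (m * n), ∀ ω,
      y t ω = if g t ω = D t ω then 1 else 0)
    -- `z` is a `{0,1}`-valued vector
    (hz01 : ∀ t ∈ Finset.Icc 1 (m * n), ∀ ω, z t ω = 0 ∨ z t ω = 1)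
    -- property (a)
    (ha : ∀ᵐ ω ∂μ, ∀ k ∈ Finset.Icc 1 n, ∀ t ∈ Finset.Icc 1 (m * n + 1),
      (m : ℝ) - max ((m * n : ℝ) - (cntA g k t ω : ℝ) - (Yval m n : ℝ)) 0
          ≤ (cntB g z k t ω : ℝ) ∧
        (cntB g z k t ω : ℝ) ≤ (m : ℝ))
    -- property (c)
    (hc : ∀ t ∈ Finset.Icc 1 (m * n), ∀ᵐ ω ∂μ,
      ((cntA g (g t ω) t ω : ℝ) < (m * n : ℝ) - (Yval m n : ℝ)) →
        (μ[(fun ω' => (z t ω' : ℝ)) | hist2 g z t (t - 1)]) ω =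
          ((m : ℝ) - (cntB g z (g t ω) t ω : ℝ)) /
            ((m * n : ℝ) - (cntA g (g t ω) t ω : ℝ) - (Yval m n : ℝ))) :
    ∀ k ∈ Finset.Icc 1 n, ∀ t ∈ Finset.Icc 1 (m * n), ∀ᵐ ω ∂μ,
      (μ[(fun ω' => Xproc m n g z k (t + 1) ω') | hist2 g z t (t - 1)]) ω
        ≤ Xproc m n g z k t ω :=
  Xproc_supermartingale_general μ m n g z hgmeas hzmeas hz01 ha hc
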